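/- Assume (H1), (H3) and (H4), and let q ∈ Q be fixed. Then the restriction Π_q of the orthogonal projection Π onto H⁻ to the amenable set 𝔄(q) is a homeomorphism of 𝔄(q) onto its image Π𝔄(q) ⊂ H⁻. -/

import Mathlib

/-!
For amenable trajectories `u`, `v` through `q`, integrating (H3) from `s` to `0` and letting
`s → -∞` along times where `e^{2νs} |u s - v s|²` is small gives
`δ ∫_{-∞}^0 e^{2νs} |u s - v s|² ds ≤ -V(u 0 - v 0) ≤ ‖P‖ |Π(u 0 - v 0)|²`,
the last step because `V ≥ 0` on `H⁺`. So some `σ ∈ [-1, 0]` has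
`|u σ - v σ| ≤ C |Π(u 0 - v 0)|`, and `u 0`, `v 0` are the images of `u σ`, `v σ` under the
cocycle over time `-σ ∈ [0, 1]`. This gives injectivity of `Π` on `𝔄(q)` at once, and continuity
of the inverse because the cocycle is continuous uniformly over that compact time interval.
-/

open MeasureTheory Set Bornology Filter Topology RealInnerProductSpace

noncomputable section

variable {Q H : Type*}

section Defs
variable [MetricSpace Q] [NormedAddCommGroup H] [InnerProductSpace ℝ H] [CompleteSpace H]

def IsFlow (ϑ : ℝ → Q → Q) : Prop :=
  (∀ q, ϑ 0 q = q) ∧ (∀ t s q, ϑ (t + s) q = ϑ t (ϑ s q)) ∧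
    Continuous fun p : ℝ × Q => ϑ p.1 p.2

def IsCocycle (ϑ : ℝ → Q → Q) (ψ : ℝ → Q → H → H) : Prop :=
  (∀ q u, ψ 0 q u = u) ∧
  (∀ t s : ℝ, 0 ≤ t → 0 ≤ s → ∀ q u, ψ (t + s) q u = ψ t (ϑ s q) (ψ s q u)) ∧
  ContinuousOn (fun p : ℝ × Q × H => ψ p.1 p.2.1 p.2.2) {p : ℝ × Q × H | 0 ≤ p.1}

def IsCompleteTraj (ϑ : ℝ → Q → Q) (ψ : ℝ → Q → H → H) (q : Q) (u : ℝ → H) : Prop :=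
  Continuous u ∧ ∀ t s : ℝ, 0 ≤ t → u (t + s) = ψ t (ϑ s q) (u s)

def IsAmenable (ν : ℝ) (u : ℝ → H) : Prop :=
  IntegrableOn (fun s : ℝ => Real.exp (2 * ν * s) * ‖u s‖ ^ 2) (Set.Iic (0:ℝ))

def amenSet (ϑ : ℝ → Q → Q) (ψ : ℝ → Q → H → H) (ν : ℝ) (q : Q) : Set H :=
  {u₀ | ∃ u : ℝ → H, IsCompleteTraj ϑ ψ q u ∧ IsAmenable ν u ∧ u 0 = u₀}

structure HypH1 (P : H →L[ℝ] H) (Hplus Hminus : Submodule ℝ H) : Prop where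
  selfAdj : IsSelfAdjoint P
  closed_plus : IsClosed (Hplus : Set H)
  orth : Hminus = Hplusᗮ
  inv_plus : ∀ u ∈ Hplus, P u ∈ Hplus
  inv_minus : ∀ u ∈ Hminus, P u ∈ Hminus
  pos : ∀ u ∈ Hplus, u ≠ 0 → (0:ℝ) < ⟪P u, u⟫
  neg : ∀ u ∈ Hminus, u ≠ 0 → ⟪P u, u⟫ < 0

def HypH2 (Hminus : Submodule ℝ H) (j : ℕ) : Prop :=
  FiniteDimensional ℝ Hminus ∧ Module.finrank ℝ Hminus = j

def HypH3 (ψ : ℝ → Q → H → H) (P : H →L[ℝ] H) (δ ν : ℝ) : Prop :=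
  0 < δ ∧ 0 < ν ∧ ∀ (q : Q) (u v : H) (l r : ℝ), 0 ≤ l → l ≤ r →
    Real.exp (2 * ν * r) * ⟪P (ψ r q u - ψ r q v), ψ r q u - ψ r q v⟫ -
      Real.exp (2 * ν * l) * ⟪P (ψ l q u - ψ l q v), ψ l q u - ψ l q v⟫ ≤
      -δ * ∫ s in l..r, Real.exp (2 * ν * s) * ‖ψ s q u - ψ s q v‖ ^ 2

def IsOrthProjOnto (Hminus : Submodule ℝ H) (Pi : H →L[ℝ] H) : Prop :=
  (∀ u, Pi u ∈ Hminus) ∧ ∀ u, u - Pi u ∈ Hminusᗮ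

def HypCOM2 (ψ : ℝ → Q → H → H) : Prop :=
  ∃ tc : ℝ, 0 < tc ∧ ∀ (q : Q) (s : Set H), IsBounded s → IsCompact (closure (ψ tc q '' s))

def HypCOM3 (ψ : ℝ → Q → H → H) : Prop :=
  ∀ (q : Q) (u₀ : H), IsBounded ((fun t => ψ t q u₀) '' Set.Ici (0:ℝ)) →
    IsCompact (closure ((fun t => ψ t q u₀) '' Set.Ici (0:ℝ)))

def LyapunovStable (ψ : ℝ → Q → H → H) (q : Q) (v : ℝ → H) : Prop :=
  ∀ ε > 0, ∃ η > 0, ∀ u₀ : H, ‖u₀ - v 0‖ < η → ∀ t ≥ 0, ‖ψ t q u₀ - v t‖ < ε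

end Defs

def circleFlow (σ : ℝ) : ℝ → AddCircle σ → AddCircle σ := fun t θ => θ + (t : AddCircle σ)

lemma frequently_atBot_lt_of_integrableOn_Iic {f : ℝ → ℝ} {a ε : ℝ}
    (hf : IntegrableOn f (Iic a)) (hε : 0 < ε) : ∃ᶠ x in atBot, f x < ε := by
  intro hge
  obtain ⟨b, hb⟩ := eventually_atBot.1 hge
  have hconst : IntegrableOn (fun _ => ε) (Iic (min a b)) := by
    refine (hf.mono_set (Iic_subset_Iic.2 (min_le_left a b))).mono' aestronglyMeasurable_const
      (ae_restrict_of_forall_mem measurableSet_Iic fun x hx => ?_)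
    rw [Real.norm_of_nonneg hε.le]
    exact not_lt.1 (hb x (hx.trans (min_le_right a b)))
  simp [integrableOn_const_iff, hε.ne'] at hconst

section

variable [NormedAddCommGroup H] [InnerProductSpace ℝ H]

lemma ContinuousLinearMap.abs_inner_apply_self_le (T : H →L[ℝ] H) (w : H) :
    |⟪T w, w⟫| ≤ ‖T‖ * ‖w‖ ^ 2 :=
  calc |⟪T w, w⟫| ≤ ‖T w‖ * ‖w‖ := abs_real_inner_le_norm _ _
    _ ≤ ‖T‖ * ‖w‖ * ‖w‖ := by gcongr; exact T.le_opNorm w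
    _ = ‖T‖ * ‖w‖ ^ 2 := by ring

lemma HypH1.neg_opNorm_mul_sq_le_inner [CompleteSpace H] {P Pi : H →L[ℝ] H}
    {Hplus Hminus : Submodule ℝ H} (h1 : HypH1 P Hplus Hminus)
    (hPi : IsOrthProjOnto Hminus Pi) (w : H) :
    -(‖P‖ * ‖Pi w‖ ^ 2) ≤ ⟪P w, w⟫ := by
  have : CompleteSpace Hplus := h1.closed_plus.completeSpace_coe
  set a := w - Pi w
  set b := Pi w
  have ha : a ∈ Hplus := by
    simpa [h1.orth, Submodule.orthogonal_orthogonal] using hPi.2 w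
  have hb : b ∈ Hminus := hPi.1 w
  have hab : ⟪P a, b⟫ = 0 :=
    Submodule.inner_right_of_mem_orthogonal (h1.inv_plus a ha) (h1.orth ▸ hb)
  have hba : ⟪P b, a⟫ = 0 :=
    Submodule.inner_right_of_mem_orthogonal (h1.inv_minus b hb) (hPi.2 w)
  have hVa : 0 ≤ ⟪P a, a⟫ := by
    rcases eq_or_ne a 0 with h | h
    · simp [h]
    · exact (h1.pos a ha h).le
  have hVb := neg_abs_le ⟪P b, b⟫
  have hdecomp : ⟪P w, w⟫ = ⟪P a, a⟫ + ⟪P b, b⟫ := by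
    have hw : w = a + b := (sub_add_cancel w b).symm
    rw [hw, map_add, inner_add_left, inner_add_right, inner_add_right, hab, hba]
    ring
  linarith [P.abs_inner_apply_self_le b]

end

section Trajectories

variable [NormedAddCommGroup H] {ϑ : ℝ → Q → Q} {ψ : ℝ → Q → H → H} {q : Q} {u v : ℝ → H}

lemma IsCompleteTraj.cocycle_sub_eq (hu : IsCompleteTraj ϑ ψ q u) {s t : ℝ} (hst : s ≤ t) :
    ψ (t - s) (ϑ s q) (u s) = u t := by
  simpa using (hu.2 (t - s) s (sub_nonneg.2 hst)).symm

lemma IsAmenable.sub {ν : ℝ} (hu : Continuous u) (hv : Continuous v)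
    (hau : IsAmenable ν u) (hav : IsAmenable ν v) : IsAmenable ν (u - v) := by
  refine ((hau.const_mul 2).add (hav.const_mul 2)).mono' (by fun_prop)
    (Eventually.of_forall fun s => ?_)
  have hnorm : ‖u s - v s‖ ^ 2 ≤ 2 * ‖u s‖ ^ 2 + 2 * ‖v s‖ ^ 2 := by
    nlinarith [norm_sub_le (u s) (v s), norm_nonneg (u s - v s), sq_nonneg (‖u s‖ - ‖v s‖)]
  rw [Real.norm_of_nonneg (by positivity)]
  simp only [Pi.sub_apply, Pi.add_apply]
  nlinarith [mul_le_mul_of_nonneg_left hnorm (Real.exp_pos (2 * ν * s)).le]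

lemma IsCompleteTraj.weighted_energy_sub_le [InnerProductSpace ℝ H] {P : H →L[ℝ] H} {δ ν : ℝ}
    (h3 : HypH3 ψ P δ ν)
    (hu : IsCompleteTraj ϑ ψ q u) (hv : IsCompleteTraj ϑ ψ q v) {s t : ℝ} (hst : s ≤ t) :
    Real.exp (2 * ν * t) * ⟪P (u t - v t), u t - v t⟫ -
        Real.exp (2 * ν * s) * ⟪P (u s - v s), u s - v s⟫ ≤
      -δ * ∫ σ in s..t, Real.exp (2 * ν * σ) * ‖u σ - v σ‖ ^ 2 := by
  have h := h3.2.2 (ϑ s q) (u s) (v s) 0 (t - s) le_rfl (sub_nonneg.2 hst)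
  have hshift : ∫ τ in (0 : ℝ)..(t - s),
        Real.exp (2 * ν * τ) * ‖ψ τ (ϑ s q) (u s) - ψ τ (ϑ s q) (v s)‖ ^ 2 =
      Real.exp (-(2 * ν * s)) * ∫ σ in s..t, Real.exp (2 * ν * σ) * ‖u σ - v σ‖ ^ 2 := by
    rw [← intervalIntegral.integral_const_mul]
    have := intervalIntegral.integral_comp_add_right
      (fun σ => Real.exp (-(2 * ν * s)) * (Real.exp (2 * ν * σ) * ‖u σ - v σ‖ ^ 2)) s
      (a := 0) (b := t - s)
    simp only [zero_add, sub_add_cancel] at this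
    rw [← this]
    refine intervalIntegral.integral_congr fun τ hτ => ?_
    rw [uIcc_of_le (sub_nonneg.2 hst)] at hτ
    have hτs : s ≤ τ + s := le_add_of_nonneg_left hτ.1
    have huτ : ψ τ (ϑ s q) (u s) = u (τ + s) := by simpa using hu.cocycle_sub_eq hτs
    have hvτ : ψ τ (ϑ s q) (v s) = v (τ + s) := by simpa using hv.cocycle_sub_eq hτs
    rw [huτ, hvτ, ← mul_assoc, ← Real.exp_add]
    ring_nf
  have hus : ψ 0 (ϑ s q) (u s) = u s := by simpa using hu.cocycle_sub_eq le_rfl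
  have hvs : ψ 0 (ϑ s q) (v s) = v s := by simpa using hv.cocycle_sub_eq le_rfl
  rw [hshift, hu.cocycle_sub_eq hst, hv.cocycle_sub_eq hst, hus, hvs, mul_zero, Real.exp_zero,
    one_mul] at h
  have hexp : Real.exp (2 * ν * t) = Real.exp (2 * ν * s) * Real.exp (2 * ν * (t - s)) := by
    rw [← Real.exp_add]; ring_nf
  have hinv : Real.exp (2 * ν * s) * Real.exp (-(2 * ν * s)) = 1 := by
    rw [← Real.exp_add, add_neg_cancel, Real.exp_zero]
  calc Real.exp (2 * ν * t) * ⟪P (u t - v t), u t - v t⟫ -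
        Real.exp (2 * ν * s) * ⟪P (u s - v s), u s - v s⟫
      = Real.exp (2 * ν * s) * (Real.exp (2 * ν * (t - s)) * ⟪P (u t - v t), u t - v t⟫ -
          ⟪P (u s - v s), u s - v s⟫) := by rw [hexp]; ring
    _ ≤ Real.exp (2 * ν * s) * (-δ * (Real.exp (-(2 * ν * s)) *
          ∫ σ in s..t, Real.exp (2 * ν * σ) * ‖u σ - v σ‖ ^ 2)) :=
        mul_le_mul_of_nonneg_left h (Real.exp_pos _).le
    _ = -δ * (Real.exp (2 * ν * s) * Real.exp (-(2 * ν * s))) *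
          ∫ σ in s..t, Real.exp (2 * ν * σ) * ‖u σ - v σ‖ ^ 2 := by ring
    _ = -δ * ∫ σ in s..t, Real.exp (2 * ν * σ) * ‖u σ - v σ‖ ^ 2 := by rw [hinv, mul_one]

lemma IsCompleteTraj.tendsto_cocycle_of_tendsto_sub [MetricSpace Q] (hcoc : IsCocycle ϑ ψ)
    (hϑ : Continuous fun p : ℝ × Q => ϑ p.1 p.2) (hu : IsCompleteTraj ϑ ψ q u)
    {K : Set ℝ} (hK : IsCompact K) (hK0 : K ⊆ Iic 0) {ι : Type*} {l : Filter ι}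
    {σ : ι → ℝ} (hσ : ∀ i, σ i ∈ K) {x : ι → H}
    (hx : Tendsto (fun i => x i - u (σ i)) l (𝓝 0)) :
    Tendsto (fun i => ψ (-σ i) (ϑ (σ i) q) (x i)) l (𝓝 (u 0)) := by
  set g : H → ℝ → H := fun z s => ψ (-s) (ϑ s q) (u s + z)
  have hg : ContinuousOn g.uncurry (univ ×ˢ K) := by
    have hϑq : Continuous fun s => ϑ s q := hϑ.comp (continuous_id.prodMk continuous_const)
    have huc := hu.1
    refine hcoc.2.2.comp (f := fun p : H × ℝ => (-p.2, ϑ p.2 q, u p.2 + p.1))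
      (Continuous.continuousOn (by fun_prop)) fun p hp =>
        show 0 ≤ -p.2 from neg_nonneg.2 (hK0 hp.2)
  have hg0 : ∀ s ∈ K, g 0 s = u 0 := fun s hs => by
    simpa [g] using hu.cocycle_sub_eq (hK0 hs)
  rw [Metric.tendsto_nhds]
  intro ε hε
  obtain ⟨V, hV, hgV⟩ := hK.mem_uniformity_of_prod hg (mem_univ 0) (Metric.dist_mem_uniformity hε)
  rw [nhdsWithin_univ] at hV
  filter_upwards [hx hV] with i hi
  simpa [g, hg0 _ (hσ i)] using hgV _ hi (σ i) (hσ i)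

end Trajectories

section AmenableSet

variable [NormedAddCommGroup H] [InnerProductSpace ℝ H] [CompleteSpace H]
  {ϑ : ℝ → Q → Q} {ψ : ℝ → Q → H → H} {q : Q} {u v : ℝ → H}
  {P Pi : H →L[ℝ] H} {Hplus Hminus : Submodule ℝ H} {δ ν : ℝ}

lemma IsCompleteTraj.integral_weighted_sq_norm_sub_le (h1 : HypH1 P Hplus Hminus)
    (h3 : HypH3 ψ P δ ν) (hPi : IsOrthProjOnto Hminus Pi)
    (hu : IsCompleteTraj ϑ ψ q u) (hv : IsCompleteTraj ϑ ψ q v)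
    (hau : IsAmenable ν u) (hav : IsAmenable ν v) :
    δ * ∫ s in Iic 0, Real.exp (2 * ν * s) * ‖u s - v s‖ ^ 2 ≤ ‖P‖ * ‖Pi (u 0 - v 0)‖ ^ 2 := by
  set F : ℝ → ℝ := fun s => Real.exp (2 * ν * s) * ‖u s - v s‖ ^ 2
  set V₀ := ⟪P (u 0 - v 0), u 0 - v 0⟫
  have hF : IntegrableOn F (Iic 0) := hau.sub hu.1 hv.1 hav
  have hlim : Tendsto (fun s => V₀ + δ * ∫ σ in s..0, F σ) atBot
      (𝓝 (V₀ + δ * ∫ s in Iic 0, F s)) :=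
    ((intervalIntegral_tendsto_integral_Iic 0 hF tendsto_id).const_mul δ).const_add V₀
  have hbound : ∀ s ≤ 0, V₀ + δ * ∫ σ in s..0, F σ ≤ ‖P‖ * F s := by
    intro s hs
    have henergy := hu.weighted_energy_sub_le h3 hv hs
    rw [mul_zero, Real.exp_zero, one_mul] at henergy
    have hVs := mul_le_mul_of_nonneg_left
      ((le_abs_self _).trans (P.abs_inner_apply_self_le (u s - v s))) (Real.exp_pos (2 * ν * s)).le
    linarith
  have hV₀ : V₀ + δ * ∫ s in Iic 0, F s ≤ 0 := by
    refine le_of_forall_pos_le_add fun ε hε => le_of_tendsto_of_frequently hlim ?_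
    refine ((frequently_atBot_lt_of_integrableOn_Iic (hF.const_mul ‖P‖) hε).and_eventually
      (eventually_le_atBot 0)).mono fun s hs => ?_
    linarith [hbound s hs.2, hs.1]
  linarith [h1.neg_opNorm_mul_sq_le_inner hPi (u 0 - v 0)]

lemma IsCompleteTraj.exists_mem_Icc_norm_sub_le (h1 : HypH1 P Hplus Hminus)
    (h3 : HypH3 ψ P δ ν) (hPi : IsOrthProjOnto Hminus Pi)
    (hu : IsCompleteTraj ϑ ψ q u) (hv : IsCompleteTraj ϑ ψ q v)
    (hau : IsAmenable ν u) (hav : IsAmenable ν v) :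
    ∃ σ ∈ Icc (-1 : ℝ) 0,
      ‖u σ - v σ‖ ≤ √(Real.exp (2 * ν) * ‖P‖ / δ) * ‖Pi (u 0 - v 0)‖ := by
  have hδ := h3.1
  set F : ℝ → ℝ := fun s => Real.exp (2 * ν * s) * ‖u s - v s‖ ^ 2
  have hF : IntegrableOn F (Iic 0) := hau.sub hu.1 hv.1 hav
  have hvol : volume (Icc (-1 : ℝ) 0) = 1 := by simp [Real.volume_Icc]
  obtain ⟨σ, hσ, hFσ⟩ := exists_le_setAverage (μ := volume) (s := Icc (-1 : ℝ) 0) (f := F)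
    (by simp [hvol]) (by simp [hvol]) (hF.mono_set Icc_subset_Iic_self)
  rw [setAverage_eq, measureReal_def, hvol, ENNReal.toReal_one, inv_one, one_smul] at hFσ
  have hIcc : ∫ s in Icc (-1) 0, F s ≤ ∫ s in Iic 0, F s :=
    setIntegral_mono_set hF (Eventually.of_forall fun s => by positivity)
      Icc_subset_Iic_self.eventuallyLE
  have hkey := hu.integral_weighted_sq_norm_sub_le h1 h3 hPi hv hau hav
  have hweight : ‖u σ - v σ‖ ^ 2 ≤ Real.exp (2 * ν) * F σ := by
    have hexp : Real.exp (2 * ν) * Real.exp (2 * ν * σ) ≥ 1 := by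
      rw [← Real.exp_add]; exact Real.one_le_exp (by nlinarith [hσ.1, h3.2.1])
    nlinarith [sq_nonneg ‖u σ - v σ‖]
  refine ⟨σ, hσ, ?_⟩
  rw [← Real.sqrt_sq (norm_nonneg (u σ - v σ)), ← Real.sqrt_sq (norm_nonneg (Pi (u 0 - v 0))),
    ← Real.sqrt_mul' _ (sq_nonneg _)]
  refine Real.sqrt_le_sqrt ?_
  rw [div_mul_eq_mul_div, le_div_iff₀ hδ]
  calc ‖u σ - v σ‖ ^ 2 * δ ≤ Real.exp (2 * ν) * (δ * F σ) := by nlinarith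
    _ ≤ Real.exp (2 * ν) * (‖P‖ * ‖Pi (u 0 - v 0)‖ ^ 2) :=
      mul_le_mul_of_nonneg_left ((mul_le_mul_of_nonneg_left (hFσ.trans hIcc) hδ.le).trans hkey)
        (Real.exp_pos _).le
    _ = _ := by ring

lemma IsCompleteTraj.eq_of_proj_eq (h1 : HypH1 P Hplus Hminus) (h3 : HypH3 ψ P δ ν)
    (hPi : IsOrthProjOnto Hminus Pi) (hu : IsCompleteTraj ϑ ψ q u)
    (hv : IsCompleteTraj ϑ ψ q v) (hau : IsAmenable ν u) (hav : IsAmenable ν v)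
    (hproj : Pi (u 0) = Pi (v 0)) : u 0 = v 0 := by
  obtain ⟨σ, hσ, hle⟩ := hu.exists_mem_Icc_norm_sub_le h1 h3 hPi hv hau hav
  rw [map_sub, hproj, sub_self, norm_zero, mul_zero, norm_le_zero_iff, sub_eq_zero] at hle
  rw [← hu.cocycle_sub_eq hσ.2, ← hv.cocycle_sub_eq hσ.2, hle]

lemma injOn_amenSet (h1 : HypH1 P Hplus Hminus) (h3 : HypH3 ψ P δ ν)
    (hPi : IsOrthProjOnto Hminus Pi) : InjOn Pi (amenSet ϑ ψ ν q) := by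
  rintro _ ⟨u, hu, hau, rfl⟩ _ ⟨v, hv, hav, rfl⟩ hproj
  exact hu.eq_of_proj_eq h1 h3 hPi hv hau hav hproj

lemma tendsto_of_tendsto_proj_amenSet [MetricSpace Q] (hflow : IsFlow ϑ) (hcoc : IsCocycle ϑ ψ)
    (h1 : HypH1 P Hplus Hminus) (h3 : HypH3 ψ P δ ν) (hPi : IsOrthProjOnto Hminus Pi)
    {ι : Type*} {l : Filter ι} {x : ι → H} (hx : ∀ i, x i ∈ amenSet ϑ ψ ν q) {y : H}
    (hy : y ∈ amenSet ϑ ψ ν q) (hproj : Tendsto (fun i => Pi (x i)) l (𝓝 (Pi y))) :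
    Tendsto x l (𝓝 y) := by
  choose u hu hau hux using hx
  obtain ⟨v, hv, hav, rfl⟩ := hy
  choose σ hσ hle using fun i => (hu i).exists_mem_Icc_norm_sub_le h1 h3 hPi hv (hau i) hav
  have hdiff : Tendsto (fun i => u i (σ i) - v (σ i)) l (𝓝 0) := by
    have hproj' : Tendsto (fun i => Pi (u i 0 - v 0)) l (𝓝 0) := by
      simpa [hux] using hproj.sub_const (Pi (v 0))
    exact squeeze_zero_norm hle (by simpa using hproj'.norm.const_mul _)
  have hx0 : ∀ i, ψ (-σ i) (ϑ (σ i) q) (u i (σ i)) = x i := fun i => by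
    simpa [hux] using (hu i).cocycle_sub_eq (hσ i).2
  simpa only [hx0] using
    hv.tendsto_cocycle_of_tendsto_sub hcoc hflow.2.2 isCompact_Icc Icc_subset_Iic_self hσ hdiff

end AmenableSet

theorem projection_homeomorphism_onto_image_general
    {Q H : Type*} [MetricSpace Q] [NormedAddCommGroup H] [InnerProductSpace ℝ H]
    [CompleteSpace H]
    (ϑ : ℝ → Q → Q) (ψ : ℝ → Q → H → H)
    (hflow : IsFlow ϑ) (hcoc : IsCocycle ϑ ψ)
    (P : H →L[ℝ] H) (Hplus Hminus : Submodule ℝ H)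
    (h1 : HypH1 P Hplus Hminus)
    (δ ν : ℝ) (h3 : HypH3 ψ P δ ν)
    (Pi : H →L[ℝ] H) (hPi : IsOrthProjOnto Hminus Pi)
    (q : Q) :
    ∃ e : ↥(amenSet ϑ ψ ν q) ≃ₜ ↥(Pi '' (amenSet ϑ ψ ν q)),
      ∀ x : ↥(amenSet ϑ ψ ν q), (e x : H) = Pi (x : H) := by
  set A := amenSet ϑ ψ ν q
  have hcont : Continuous fun x : A => Pi x := by fun_prop
  have hinducing : IsInducing fun x : A => Pi x := by
    refine isInducing_iff_nhds.2 fun x => le_antisymm (hcont.tendsto x).le_comap ?_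
    exact tendsto_id'.1 (tendsto_subtype_rng.2 (tendsto_of_tendsto_proj_amenSet hflow hcoc h1 h3
      hPi (fun i : A => i.2) x.2 tendsto_comap))
  have hemb : IsEmbedding fun x : A => Pi x :=
    ⟨hinducing, fun x y h => Subtype.ext (injOn_amenSet h1 h3 hPi x.2 y.2 h)⟩
  exact ⟨hemb.toHomeomorph.trans (Homeomorph.setCongr (image_eq_range Pi A).symm), fun x => rfl⟩

/-- Lemma 2: under (H1), (H3) and (H4), the restriction of the orthogonal projection `Π`
onto `H⁻` to the amenable set `𝔄(q)` is a homeomorphism onto its image `Π 𝔄(q)`. -/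
theorem projection_homeomorphism_onto_image
    {Q H : Type*} [MetricSpace Q] [NormedAddCommGroup H] [InnerProductSpace ℝ H]
    [CompleteSpace H] [TopologicalSpace.SeparableSpace H]
    (ϑ : ℝ → Q → Q) (ψ : ℝ → Q → H → H)
    (hflow : IsFlow ϑ) (hcoc : IsCocycle ϑ ψ)
    (P : H →L[ℝ] H) (Hplus Hminus : Submodule ℝ H)
    (h1 : HypH1 P Hplus Hminus)
    (δ ν : ℝ) (h3 : HypH3 ψ P δ ν)
    (h4 : ∀ q : Q, (amenSet ϑ ψ ν q).Nonempty)
    (Pi : H →L[ℝ] H) (hPi : IsOrthProjOnto Hminus Pi)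
    (q : Q) :
    ∃ e : ↥(amenSet ϑ ψ ν q) ≃ₜ ↥(Pi '' (amenSet ϑ ψ ν q)),
      ∀ x : ↥(amenSet ϑ ψ ν q), (e x : H) = Pi (x : H) :=
  projection_homeomorphism_onto_image_general ϑ ψ hflow hcoc P Hplus Hminus h1 δ ν h3 Pi hPi q
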